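/- arXiv:1103.5019 — 5 statements merged into one kernel-verified Lean document; each statement's English description precedes it below -/
import Mathlib

section
/- Let l ≥ 1, n ≥ 1, let |·| be a norm on ℂ^n, and let T be a power bounded linear operator on (ℂ^n, |·|) having n distinct eigenvalues λ_1, …, λ_n, all in the open unit disc 𝔻. Let λ ∈ ℂ with |λ| > 1, and let f(z) = ∑_{k≥0} a_k z^k be a function with ∑_{k≥0} |a_k| < ∞ satisfying f(λ_j) = 1/(λ−λ_j)^l for every j = 1, …, n. Then ‖(λI − T)^{−l}‖ ≤ P(T) · ∑_{k≥0} |a_k|. -/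
/-!
Distinct eigenvalues make `T` diagonalizable. On the eigenvector for `λⱼ`, the operator
`f(T) = ∑ aₖ Tᵏ` acts as the scalar `f(λⱼ) = (μ - λⱼ)⁻ˡ` and `(μI - T)ˡ` as `(μ - λⱼ)ˡ`, so
`f(T)` is the inverse of `(μI - T)ˡ`, and `‖f(T)‖ ≤ ∑ |aₖ| ‖Tᵏ‖ ≤ P(T) ∑ |aₖ|`.
-/

open Module

theorem Module.End.exists_basis_hasEigenvector {K V ι : Type*} [Field K] [AddCommGroup V]
    [Module K V] [FiniteDimensional K V] [Fintype ι] (f : End K V) (μ : ι → K)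
    (hμ : Function.Injective μ) (hspec : ∀ i, μ i ∈ spectrum K f)
    (hcard : Fintype.card ι = finrank K V) :
    ∃ b : Basis ι K V, ∀ i, f.HasEigenvector (μ i) (b i) := by
  choose v hv using fun i => (HasEigenvalue.of_mem_spectrum (hspec i)).exists_hasEigenvector
  exact ⟨basisOfLinearIndependentOfCardEqFinrank' v
    (f.eigenvectors_linearIndependent' μ hμ v hv) hcard, by simpa using hv⟩

section PowerSeries

variable {𝕜 A : Type*} [NormedField 𝕜] [SeminormedRing A] [NormedAlgebra 𝕜 A] {a : ℕ → 𝕜} {x : A}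

theorem norm_smul_pow_le_iSup (hx : BddAbove (Set.range fun k => ‖x ^ k‖)) (k : ℕ) :
    ‖a k • x ^ k‖ ≤ ‖a k‖ * ⨆ k, ‖x ^ k‖ :=
  (norm_smul_le _ _).trans (mul_le_mul_of_nonneg_left (le_ciSup hx k) (norm_nonneg _))

theorem summable_norm_smul_pow (ha : Summable fun k => ‖a k‖)
    (hx : BddAbove (Set.range fun k => ‖x ^ k‖)) : Summable fun k => ‖a k • x ^ k‖ :=
  .of_nonneg_of_le (fun _ => norm_nonneg _) (norm_smul_pow_le_iSup hx) (ha.mul_right _)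

theorem norm_tsum_smul_pow_le (ha : Summable fun k => ‖a k‖)
    (hx : BddAbove (Set.range fun k => ‖x ^ k‖)) :
    ‖∑' k, a k • x ^ k‖ ≤ (⨆ k, ‖x ^ k‖) * ∑' k, ‖a k‖ :=
  calc ‖∑' k, a k • x ^ k‖ ≤ ∑' k, ‖a k • x ^ k‖ :=
        norm_tsum_le_tsum_norm (summable_norm_smul_pow ha hx)
    _ ≤ ∑' k, ‖a k‖ * ⨆ k, ‖x ^ k‖ :=
      (summable_norm_smul_pow ha hx).tsum_le_tsum (norm_smul_pow_le_iSup hx) (ha.mul_right _)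
    _ = (⨆ k, ‖x ^ k‖) * ∑' k, ‖a k‖ := by rw [tsum_mul_right, mul_comm]

end PowerSeries

theorem summable_mul_pow_of_norm_le_one {𝕜 : Type*} [NormedField 𝕜] [CompleteSpace 𝕜]
    {a : ℕ → 𝕜} {c : 𝕜}
    (ha : Summable fun k => ‖a k‖) (hc : ‖c‖ ≤ 1) : Summable fun k => a k * c ^ k :=
  .of_norm_bounded ha fun k => by
    rw [norm_mul, norm_pow]
    exact mul_le_of_le_one_right (norm_nonneg _) (pow_le_one₀ (norm_nonneg _) hc)

namespace ContinuousLinearMap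

variable {𝕜 E : Type*} [NontriviallyNormedField 𝕜] [NormedAddCommGroup E] [NormedSpace 𝕜 E]

theorem pow_apply_of_apply_eq_smul {T : E →L[𝕜] E} {v : E} {c : 𝕜} (h : T v = c • v) (k : ℕ) :
    (T ^ k) v = c ^ k • v := by
  induction k with
  | zero => simp
  | succ k ih => rw [pow_succ, mul_apply_eq_comp, h, map_smul, ih, smul_smul, pow_succ']

theorem tsum_smul_pow_apply_of_apply_eq_smul {T : E →L[𝕜] E} {v : E} {c : 𝕜} {a : ℕ → 𝕜}
    (h : T v = c • v) (hT : Summable fun k => a k • T ^ k) (hc : Summable fun k => a k * c ^ k) :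
    (∑' k, a k • T ^ k) v = (∑' k, a k * c ^ k) • v := by
  have h_apply := (apply 𝕜 E v).map_tsum hT
  simp only [apply_apply] at h_apply
  rw [h_apply, ← hc.tsum_smul_const]
  simp only [smul_apply, pow_apply_of_apply_eq_smul h, smul_smul]

theorem mul_eq_one_of_apply_basis {ι : Type*} (b : Basis ι 𝕜 E) {S T : E →L[𝕜] E}
    {c d : ι → 𝕜}
    (hS : ∀ i, S (b i) = c i • b i) (hT : ∀ i, T (b i) = d i • b i) (hcd : ∀ i, c i * d i = 1) :
    S * T = 1 :=
  coe_injective <| b.ext fun i => by simp [hT, hS, smul_smul, mul_comm (d i), hcd]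

end ContinuousLinearMap

open ContinuousLinearMap in
theorem iterated_resolvent_le_wiener_interpolation_general
    (l n : ℕ) (hn : 1 ≤ n)
    (E : Type) [NormedAddCommGroup E] [NormedSpace ℂ E]
    (hdim : Module.finrank ℂ E = n)
    (T : E →L[ℂ] E)
    (hpb : ∃ C : ℝ, ∀ k : ℕ, ‖T ^ k‖ ≤ C)
    (lam : Fin n → ℂ) (hinj : Function.Injective lam)
    (hspec : spectrum ℂ T = Set.range lam)
    (hmod : ∀ j, ‖lam j‖ < 1)
    (μ : ℂ) (hμ : 1 < ‖μ‖)
    (a : ℕ → ℂ) (ha : Summable fun k => ‖a k‖)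
    (hinterp : ∀ j, ∑' k : ℕ, a k * (lam j) ^ k = 1 / (μ - lam j) ^ l) :
    ‖(Ring.inverse (algebraMap ℂ (E →L[ℂ] E) μ - T)) ^ l‖
      ≤ (⨆ k : ℕ, ‖T ^ k‖) * ∑' k : ℕ, ‖a k‖ := by
  have : FiniteDimensional ℂ E := Module.finite_of_finrank_pos (by omega)
  obtain ⟨b, hb⟩ := Module.End.exists_basis_hasEigenvector (T : Module.End ℂ E) lam hinj
    (fun j => by rw [← spectrum_eq, hspec]; exact Set.mem_range_self j) (by simp [hdim])
  have hTb (j) : T (b j) = lam j • b j := (hb j).apply_eq_smul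
  have hbdd : BddAbove (Set.range fun k => ‖T ^ k‖) :=
    let ⟨C, hC⟩ := hpb; ⟨C, Set.forall_mem_range.2 hC⟩
  have hsum : Summable fun k => a k • T ^ k := (summable_norm_smul_pow ha hbdd).of_norm
  have hne (j) : (μ - lam j) ^ l ≠ 0 :=
    pow_ne_zero _ <| sub_ne_zero.2 fun h => (hmod j).not_gt (h ▸ hμ)
  set X := algebraMap ℂ (E →L[ℂ] E) μ - T
  have hXb (j) : (X ^ l) (b j) = (μ - lam j) ^ l • b j :=
    pow_apply_of_apply_eq_smul (by simp [X, hTb, sub_smul]) l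
  have hSb (j) : (∑' k, a k • T ^ k) (b j) = (1 / (μ - lam j) ^ l) • b j := by
    rw [tsum_smul_pow_apply_of_apply_eq_smul (hTb j) hsum
      (summable_mul_pow_of_norm_le_one ha (hmod j).le), hinterp]
  let U : (E →L[ℂ] E)ˣ :=
    ⟨X ^ l, ∑' k, a k • T ^ k,
      mul_eq_one_of_apply_basis b hXb hSb fun j => mul_one_div_cancel (hne j),
      mul_eq_one_of_apply_basis b hSb hXb fun j => one_div_mul_cancel (hne j)⟩
  rw [Ring.inverse_pow, show X ^ l = U from rfl, Ring.inverse_unit]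
  exact norm_tsum_smul_pow_le ha hbdd

/-- For a power bounded operator `T` on `(ℂⁿ, |·|)` with `n` distinct
eigenvalues in the open unit disc, if `f(z) = ∑ aₖ zᵏ` has absolutely summable coefficients
and interpolates `1/(λ - λⱼ)ˡ` at each eigenvalue `λⱼ`, then
`‖(λI - T)⁻ˡ‖ ≤ P(T) · ∑ |aₖ|`. An arbitrary norm on `ℂⁿ` is modeled by an
`n`-dimensional complex normed space `E`. -/
theorem iterated_resolvent_le_wiener_interpolation
    (l n : ℕ) (hl : 1 ≤ l) (hn : 1 ≤ n)
    (E : Type) [NormedAddCommGroup E] [NormedSpace ℂ E]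
    (hdim : Module.finrank ℂ E = n)
    (T : E →L[ℂ] E)
    (hpb : ∃ C : ℝ, ∀ k : ℕ, ‖T ^ k‖ ≤ C)
    (lam : Fin n → ℂ) (hinj : Function.Injective lam)
    (hspec : spectrum ℂ T = Set.range lam)
    (hmod : ∀ j, ‖lam j‖ < 1)
    (μ : ℂ) (hμ : 1 < ‖μ‖)
    (a : ℕ → ℂ) (ha : Summable fun k => ‖a k‖)
    (hinterp : ∀ j, ∑' k : ℕ, a k * (lam j) ^ k = 1 / (μ - lam j) ^ l) :
    ‖(Ring.inverse (algebraMap ℂ (E →L[ℂ] E) μ - T)) ^ l‖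
      ≤ (⨆ k : ℕ, ‖T ^ k‖) * ∑' k : ℕ, ‖a k‖ :=
  iterated_resolvent_le_wiener_interpolation_general l n hn E hdim T hpb lam hinj hspec hmod μ hμ a
    ha hinterp
end

section
/- Let α ∈ (0,1), n ≥ 1, let |·| be a norm on ℂ^n, and let T be a power bounded linear operator on (ℂ^n, |·|). Then ρ_α(T) < ∞ if and only if r(T) < 1. -/
/-! Power boundedness puts `σ(T)` in the closed unit disc. If some `μ ∈ σ(T)` had `‖μ‖ = 1`,
then at `z = (1 + ε) μ` the resolvent has norm at least `1 / ‖z - μ‖ = 1 / ε`, so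
`(‖z‖ - 1) ^ α ‖R(z, T)‖ ≥ ε ^ (α - 1)`, which is unbounded as `ε → 0` because `α < 1`.
Conversely, if `r(T) < 1`, Gelfand's formula makes `S = ∑ ‖T ^ k‖` finite, the Neumann series
gives `‖z‖ ‖R(z, T)‖ ≤ S` for `‖z‖ ≥ 1`, and `(‖z‖ - 1) ^ α ≤ ‖z‖`. -/

open Filter

section Definitions

variable (𝕜 : Type*) {A : Type*} [NormedField 𝕜] [NormedRing A] [NormedAlgebra 𝕜 A]

def IsPowerBounded (a : A) : Prop :=
  ∃ C : ℝ, ∀ k : ℕ, ‖a ^ k‖ ≤ C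

/-- The resolvent condition `ρ_α(a) < ∞`. -/
def IsKreissBounded (α : ℝ) (a : A) : Prop :=
  ∃ C : ℝ, ∀ z : 𝕜, 1 < ‖z‖ → (‖z‖ - 1) ^ α * ‖resolvent a z‖ ≤ C

end Definitions

theorem Units.norm_inv_inv_le_norm_sub {R : Type*} [NormedRing R] [HasSummableGeomSeries R]
    (u : Rˣ) {y : R} (hy : ¬IsUnit y) : ‖(↑u⁻¹ : R)‖⁻¹ ≤ ‖y - u‖ :=
  not_lt.mp fun h => hy (u.ofNearby y h).isUnit

namespace spectrum

variable {𝕜 A : Type*} [NormedField 𝕜] [NormedRing A] [NormedAlgebra 𝕜 A] [NormOneClass A]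
  [CompleteSpace A]

theorem inv_norm_sub_le_norm_resolvent {a : A} {z μ : 𝕜}
    (hz : z ∈ resolventSet 𝕜 a) (hμ : μ ∈ spectrum 𝕜 a) :
    ‖z - μ‖⁻¹ ≤ ‖resolvent a z‖ := by
  obtain _ | _ := subsingleton_or_nontrivial A
  · simp [of_subsingleton] at hμ
  have hdist : ‖(↑hz.unit⁻¹ : A)‖⁻¹ ≤ ‖z - μ‖ := by
    have := hz.unit.norm_inv_inv_le_norm_sub (mem_iff.mp hμ)
    rwa [hz.unit_spec, sub_sub_sub_cancel_right, ← map_sub, norm_algebraMap', norm_sub_rev]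
      at this
  rw [resolvent_eq hz]
  exact inv_le_of_inv_le₀ (Units.norm_pos _) hdist

theorem norm_le_one_of_isPowerBounded {a : A} (ha : IsPowerBounded a) {μ : 𝕜}
    (hμ : μ ∈ spectrum 𝕜 a) : ‖μ‖ ≤ 1 := by
  obtain ⟨C, hC⟩ := ha
  by_contra! h
  obtain ⟨k, hk⟩ := pow_unbounded_of_one_lt C h
  have hmem : μ ^ k ∈ spectrum 𝕜 (a ^ k) := pow_image_subset a k ⟨μ, hμ, rfl⟩
  have := (norm_le_norm_of_mem hmem).trans (hC k)
  rw [norm_pow] at this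
  exact this.not_gt hk

end spectrum

theorem exists_pos_lt_rpow_sub_one {α : ℝ} (hα : α < 1) (C : ℝ) :
    ∃ ε : ℝ, 0 < ε ∧ C < ε ^ (α - 1) :=
  (((tendsto_rpow_neg_nhdsGT_zero (by linarith : α - 1 < 0)).eventually_gt_atTop C).and
    self_mem_nhdsWithin).exists.imp fun _ h => ⟨h.2, h.1⟩

theorem IsKreissBounded.norm_lt_one {𝕜 A : Type*} [RCLike 𝕜] [NormedRing A] [NormedAlgebra 𝕜 A]
    [NormOneClass A] [CompleteSpace A] {α : ℝ} (hα : α < 1) {a : A}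
    (hK : IsKreissBounded 𝕜 α a) (hσ : ∀ ν ∈ spectrum 𝕜 a, ‖ν‖ ≤ 1) {μ : 𝕜}
    (hμ : μ ∈ spectrum 𝕜 a) : ‖μ‖ < 1 := by
  obtain ⟨C, hC⟩ := hK
  refine (hσ μ hμ).lt_of_ne fun hμ1 => ?_
  obtain ⟨ε, hε, hCε⟩ := exists_pos_lt_rpow_sub_one hα C
  set z : 𝕜 := (1 + ε) • μ
  have hz : ‖z‖ = 1 + ε := by
    rw [norm_smul, hμ1, mul_one, Real.norm_of_nonneg (by linarith)]
  have hzμ : ‖z - μ‖ = ε := by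
    rw [show z - μ = ε • μ by simp [z, add_smul], norm_smul, hμ1, mul_one,
      Real.norm_of_nonneg hε.le]
  have hzρ : z ∈ resolventSet 𝕜 a := by
    by_contra hzσ
    linarith [hσ z hzσ]
  have hR := spectrum.inv_norm_sub_le_norm_resolvent hzρ hμ
  rw [hzμ] at hR
  have := hC z (by rw [hz]; linarith)
  rw [hz, add_sub_cancel_left] at this
  have hεpow : ε ^ (α - 1) = ε ^ α * ε⁻¹ := by
    rw [Real.rpow_sub hε, Real.rpow_one, div_eq_mul_inv]
  have : ε ^ α * ε⁻¹ ≤ C :=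
    (mul_le_mul_of_nonneg_left hR (Real.rpow_nonneg hε.le α)).trans this
  linarith

theorem summable_norm_pow_of_spectralRadius_lt_one {A : Type*} [NormedRing A]
    [NormedAlgebra ℂ A] [CompleteSpace A] {a : A} (h : spectralRadius ℂ a < 1) :
    Summable fun k => ‖a ^ k‖ := by
  obtain ⟨q, hrq, hq1⟩ := ENNReal.lt_iff_exists_nnreal_btwn.mp h
  have hgeom : ∀ᶠ k : ℕ in atTop, ‖‖a ^ k‖‖ ≤ (q : ℝ) ^ k := by
    filter_upwards [(spectrum.pow_nnnorm_pow_one_div_tendsto_nhds_spectralRadius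
      a).eventually_lt_const hrq, eventually_gt_atTop 0] with k hk hk0
    rw [one_div, ENNReal.rpow_inv_lt_iff (by positivity), ENNReal.rpow_natCast] at hk
    rw [norm_norm, ← coe_nnnorm, ← NNReal.coe_pow, NNReal.coe_le_coe]
    exact_mod_cast hk.le
  exact .of_norm_bounded_eventually_nat (summable_geometric_of_lt_one q.2 (by exact_mod_cast hq1))
    hgeom

theorem norm_mul_norm_resolvent_le_tsum {𝕜 A : Type*} [NormedField 𝕜] [NormedRing A]
    [NormedAlgebra 𝕜 A] [CompleteSpace A] {a : A} (ha : Summable fun k => ‖a ^ k‖) {z : 𝕜}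
    (hz : 1 ≤ ‖z‖) : ‖z‖ * ‖resolvent a z‖ ≤ ∑' k, ‖a ^ k‖ := by
  set u : 𝕜ˣ := Units.mk0 z (norm_pos_iff.mp (one_pos.trans_le hz))
  set x : A := u⁻¹ • a
  have hx : ∀ k, ‖x ^ k‖ ≤ ‖a ^ k‖ := fun k => by
    rw [smul_pow, Units.smul_def, norm_smul, Units.val_pow_eq_pow_val, Units.val_inv_eq_inv_val,
      Units.val_mk0, inv_pow, norm_inv, norm_pow z k]
    exact mul_le_of_le_one_left (norm_nonneg _) (inv_le_one_of_one_le₀ (one_le_pow₀ hz))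
  have hxs : Summable fun k => ‖x ^ k‖ := ha.of_nonneg_of_le (fun _ => norm_nonneg _) hx
  have hneumann : resolvent x (1 : 𝕜) = ∑' k, x ^ k := by
    have hsum := hxs.of_norm
    rw [resolvent, map_one]
    exact Ring.inverse_unit ⟨1 - x, _, hsum.one_sub_mul_tsum_pow, hsum.tsum_pow_mul_one_sub⟩
  calc ‖z‖ * ‖resolvent a z‖ = ‖u • resolvent a (u : 𝕜)‖ := by
        rw [Units.smul_def, norm_smul, Units.val_mk0]
    _ = ‖∑' k, x ^ k‖ := by rw [spectrum.units_smul_resolvent_self, hneumann]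
    _ ≤ ∑' k, ‖x ^ k‖ := norm_tsum_le_tsum_norm hxs
    _ ≤ ∑' k, ‖a ^ k‖ := hxs.tsum_le_tsum hx ha

theorem rpow_sub_one_le_self {s α : ℝ} (hs : 1 ≤ s) (hα0 : 0 ≤ α) (hα1 : α ≤ 1) :
    (s - 1) ^ α ≤ s := by
  have := rpow_one_add_le_one_add_mul_self (s := s - 2) (by linarith) hα0 hα1
  rw [show 1 + (s - 2) = s - 1 by ring] at this
  nlinarith

theorem isKreissBounded_of_summable_norm_pow {𝕜 A : Type*} [NormedField 𝕜] [NormedRing A]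
    [NormedAlgebra 𝕜 A] [CompleteSpace A] {α : ℝ} (hα0 : 0 ≤ α) (hα1 : α ≤ 1) {a : A}
    (ha : Summable fun k => ‖a ^ k‖) : IsKreissBounded 𝕜 α a :=
  ⟨∑' k, ‖a ^ k‖, fun _ hz =>
    (mul_le_mul_of_nonneg_right (rpow_sub_one_le_self hz.le hα0 hα1) (norm_nonneg _)).trans
      (norm_mul_norm_resolvent_le_tsum ha hz.le)⟩

theorem IsKreissBounded.spectralRadius_lt_one {A : Type*} [NormedRing A] [NormedAlgebra ℂ A]
    [NormOneClass A] [CompleteSpace A] [Nontrivial A] {α : ℝ} (hα : α < 1) {a : A}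
    (hK : IsKreissBounded ℂ α a) (hpb : IsPowerBounded a) : spectralRadius ℂ a < 1 := by
  have hσ (ν : ℂ) (hν : ν ∈ spectrum ℂ a) : ‖ν‖ ≤ 1 := spectrum.norm_le_one_of_isPowerBounded hpb hν
  simpa using spectrum.spectralRadius_lt_of_forall_lt a (r := 1) fun μ hμ => by
    exact_mod_cast hK.norm_lt_one hα hσ hμ

/-- For a power bounded operator `T` on `(ℂⁿ, |·|)` and `α ∈ (0,1)`,
the generalized Kreiss condition `ρ_α(T) = sup_{|z|>1} (|z|-1)^α ‖R(z,T)‖ < ∞` holds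
if and only if the spectral radius satisfies `r(T) < 1`. -/
theorem kreiss_alpha_finite_iff_spectralRadius_lt_one
    (α : ℝ) (hα : α ∈ Set.Ioo (0:ℝ) 1) (n : ℕ) (hn : 1 ≤ n)
    (E : Type) [NormedAddCommGroup E] [NormedSpace ℂ E]
    (hdim : Module.finrank ℂ E = n)
    (T : E →L[ℂ] E)
    (hpb : ∃ C : ℝ, ∀ k : ℕ, ‖T ^ k‖ ≤ C) :
    (∃ C : ℝ, ∀ z : ℂ, 1 < ‖z‖ →
        (‖z‖ - 1) ^ α * ‖Ring.inverse (algebraMap ℂ (E →L[ℂ] E) z - T)‖ ≤ C)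
      ↔ spectralRadius ℂ T < 1 := by
  have hfin : 0 < Module.finrank ℂ E := hdim ▸ hn
  have : FiniteDimensional ℂ E := .of_finrank_pos hfin
  have : Nontrivial E := Module.nontrivial_of_finrank_pos hfin
  have : CompleteSpace E := FiniteDimensional.complete ℂ E
  change IsKreissBounded ℂ α T ↔ _
  exact ⟨fun hK => hK.spectralRadius_lt_one hα.2 hpb, fun hr =>
    isKreissBounded_of_summable_norm_pow hα.1.le hα.2.le
      (summable_norm_pow_of_spectralRadius_lt_one hr)⟩
end

section
/- Let n ≥ 1 and r ∈ (0,1). Then the operator A_r = (r I_n + M_n)(I_n + r M_n)^{−1} on ℂ^n with the Euclidean norm is a contraction in the strong sense that sup_{k≥0} ‖A_r^k‖ ≤ 1 (so P(A_r) ≤ 1), and its spectrum is σ(A_r) = {r}. -/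
/-!
`A_r = b_r(M_n)` for the Möbius map `b_r(z) = (r + z)/(1 + r z)`.
Writing `x = (1 + r M) y`, we get `A_r x = r y + M y`, and for `w = M y`
`‖y + r w‖² - ‖r y + w‖² = (1 - r²)(‖y‖² - ‖w‖²) ≥ 0` because the shift `M` is a contraction;
hence `‖A_r‖ ≤ 1` and all powers are contractions.
Moreover `A_r - r = (1 - r²) M (1 + r M)⁻¹` is nilpotent, as `M` is, so `σ(A_r) = {r}`.
-/

/-- The `n×n` nilpotent Jordan matrix with `1` on the superdiagonal. -/
noncomputable def jordanNilpotent (n : ℕ) : Matrix (Fin n) (Fin n) ℂ :=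
  Matrix.of fun i j => if (i : ℕ) + 1 = (j : ℕ) then 1 else 0

/-- `A_r = (r Iₙ + Mₙ)(Iₙ + r Mₙ)⁻¹`. -/
noncomputable def ArMatrix (n : ℕ) (r : ℝ) : Matrix (Fin n) (Fin n) ℂ :=
  ((r : ℂ) • 1 + jordanNilpotent n) * (1 + (r : ℂ) • jordanNilpotent n)⁻¹

lemma spectrum_algebraMap_add_of_isNilpotent {𝕜 A : Type*} [Field 𝕜] [Ring A] [Algebra 𝕜 A]
    [Nontrivial A] (c : 𝕜) {a : A} (ha : IsNilpotent a) :
    spectrum 𝕜 (algebraMap 𝕜 A c + a) = {c} := by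
  suffices spectrum 𝕜 a = {0} by
    rw [← spectrum.singleton_add_eq, this, Set.singleton_add_singleton, add_zero]
  ext z
  simp only [spectrum.mem_iff, Set.mem_singleton_iff]
  refine ⟨fun h => by_contra fun hz => h ?_, ?_⟩
  · rw [sub_eq_add_neg]
    exact ha.neg.isUnit_add_left_of_commute ((isUnit_iff_ne_zero.mpr hz).map _)
      (Algebra.commutes z _).symm
  · rintro rfl
    simpa using ha.not_isUnit

lemma ContinuousLinearMap.norm_pow_le_one {𝕜 E : Type*} [NontriviallyNormedField 𝕜]
    [SeminormedAddCommGroup E] [NormedSpace 𝕜 E] {T : E →L[𝕜] E} (hT : ‖T‖ ≤ 1) :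
    ∀ k : ℕ, ‖T ^ k‖ ≤ 1
  | 0 => by simpa [one_def] using norm_id_le
  | k + 1 => (norm_pow_le' T k.succ_pos).trans (pow_le_one₀ (norm_nonneg T) hT)

lemma norm_ofReal_smul_add_le {𝕜 E : Type*} [RCLike 𝕜] [NormedAddCommGroup E]
    [InnerProductSpace 𝕜 E] {r : ℝ} (hr : |r| ≤ 1) {y w : E} (hw : ‖w‖ ≤ ‖y‖) :
    ‖(r : 𝕜) • y + w‖ ≤ ‖y + (r : 𝕜) • w‖ := by
  have key : ‖y + (r : 𝕜) • w‖ ^ 2 - ‖(r : 𝕜) • y + w‖ ^ 2 =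
      (1 - r ^ 2) * (‖y‖ ^ 2 - ‖w‖ ^ 2) := by
    rw [norm_add_sq (𝕜 := 𝕜), norm_add_sq (𝕜 := 𝕜), inner_smul_left, inner_smul_right,
      RCLike.conj_ofReal, RCLike.re_ofReal_mul, norm_smul, norm_smul, RCLike.norm_ofReal,
      mul_pow, mul_pow, sq_abs]
    ring
  have hr2 : r ^ 2 ≤ 1 := (sq_le_one_iff_abs_le_one r).mpr hr
  have hyw : ‖w‖ ^ 2 ≤ ‖y‖ ^ 2 := pow_le_pow_left₀ (norm_nonneg w) hw 2
  have hdiff := mul_nonneg (sub_nonneg.mpr hr2) (sub_nonneg.mpr hyw)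
  exact (sq_le_sq₀ (norm_nonneg _) (norm_nonneg _)).mp (by linarith)

lemma ContinuousLinearMap.norm_mobius_le_one {𝕜 E : Type*} [RCLike 𝕜] [NormedAddCommGroup E]
    [InnerProductSpace 𝕜 E] {N V : E →L[𝕜] E} (hN : ‖N‖ ≤ 1) {r : ℝ} (hr : |r| ≤ 1)
    (hV : (1 + (r : 𝕜) • N) * V = 1) : ‖((r : 𝕜) • 1 + N) * V‖ ≤ 1 := by
  refine opNorm_le_bound _ zero_le_one fun x => ?_
  have hx : V x + (r : 𝕜) • N (V x) = x := by
    simpa using congr($hV x)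
  calc ‖(((r : 𝕜) • 1 + N) * V) x‖ = ‖(r : 𝕜) • V x + N (V x)‖ := by simp
    _ ≤ ‖V x + (r : 𝕜) • N (V x)‖ :=
      norm_ofReal_smul_add_le hr ((N.le_of_opNorm_le hN _).trans_eq (one_mul _))
    _ = 1 * ‖x‖ := by rw [hx, one_mul]

open Matrix

lemma Matrix.isNilpotent_mobius_sub_smul_one {ι R : Type*} [Fintype ι] [DecidableEq ι]
    [CommRing R] {M : Matrix ι ι R} (hM : IsNilpotent M) (c : R) :
    IsNilpotent ((c • 1 + M) * (1 + c • M)⁻¹ - c • 1) := by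
  obtain ⟨u, hu⟩ := (hM.smul c).isUnit_one_add
  set V : Matrix ι ι R := ↑u⁻¹
  have hinv : (1 + c • M)⁻¹ = V := by rw [← hu, ← coe_units_inv]
  have hcomm : Commute M V := Commute.units_inv_right <| hu ▸
    (Commute.one_right M).add_right ((Commute.refl M).smul_right c)
  have hdiff : (c • 1 + M) * V - c • 1 = ((1 - c ^ 2) • M) * V := by
    calc (c • 1 + M) * V - c • 1 = (c • 1 + M - c • ↑u) * V := by
          rw [sub_mul, smul_mul_assoc, u.mul_inv]
      _ = ((1 - c ^ 2) • M) * V := by rw [hu]; congr 1; module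
  rw [hinv, hdiff]
  exact (hcomm.smul_left _).isNilpotent_mul_right (hM.smul _)

lemma jordanNilpotent_pow_apply (n k : ℕ) (i j : Fin n) :
    (jordanNilpotent n ^ k) i j = if (i : ℕ) + k = j then 1 else 0 := by
  induction k generalizing j with
  | zero => simp [one_apply, Fin.ext_iff]
  | succ k ih =>
    rw [pow_succ, mul_apply]
    simp only [ih]
    simp only [jordanNilpotent, of_apply, ite_mul, one_mul, zero_mul]
    by_cases h : (i : ℕ) + k < n
    · rw [Finset.sum_eq_single_of_mem ⟨(i : ℕ) + k, h⟩ (Finset.mem_univ _)]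
      · simp [add_assoc]
      · exact fun b _ hb => if_neg fun hc => hb (Fin.ext hc.symm)
    · rw [if_neg (by omega)]
      exact Finset.sum_eq_zero fun b _ => if_neg (by omega)

lemma isNilpotent_jordanNilpotent (n : ℕ) : IsNilpotent (jordanNilpotent n) :=
  ⟨n, by ext i j; simp [jordanNilpotent_pow_apply]; omega⟩

lemma jordanNilpotent_mulVec_castSucc {m : ℕ} (z : Fin (m + 1) → ℂ) (i : Fin m) :
    (jordanNilpotent (m + 1) *ᵥ z) i.castSucc = z i.succ := by
  rw [mulVec, dotProduct, Finset.sum_eq_single_of_mem i.succ (Finset.mem_univ _)]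
  · simp [jordanNilpotent]
  · intro j _ hj
    simp only [jordanNilpotent, of_apply, Fin.val_castSucc]
    rw [if_neg fun h => hj (Fin.ext (by simp [← h])), zero_mul]

lemma jordanNilpotent_mulVec_last {m : ℕ} (z : Fin (m + 1) → ℂ) :
    (jordanNilpotent (m + 1) *ᵥ z) (Fin.last m) = 0 := by
  rw [mulVec, dotProduct]
  refine Finset.sum_eq_zero fun j _ => ?_
  simp only [jordanNilpotent, of_apply, Fin.val_last]
  rw [if_neg (by omega), zero_mul]

lemma norm_toEuclideanCLM_jordanNilpotent_le (n : ℕ) :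
    ‖toEuclideanCLM (𝕜 := ℂ) (jordanNilpotent n)‖ ≤ 1 := by
  refine ContinuousLinearMap.opNorm_le_bound _ zero_le_one fun y => ?_
  rw [one_mul, EuclideanSpace.norm_eq, EuclideanSpace.norm_eq]
  refine Real.sqrt_le_sqrt ?_
  change ∑ i, ‖(jordanNilpotent n *ᵥ y.ofLp) i‖ ^ 2 ≤ ∑ i, ‖y.ofLp i‖ ^ 2
  rcases n with _ | m
  · simp
  rw [Fin.sum_univ_castSucc, Fin.sum_univ_succ]
  simp only [jordanNilpotent_mulVec_castSucc, jordanNilpotent_mulVec_last, norm_zero]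
  nlinarith [sq_nonneg ‖y.ofLp 0‖]

/-- For `r ∈ (0,1)`, the operator `A_r` on Euclidean `ℂⁿ` is a contraction:
`‖A_rᵏ‖ ≤ 1` for all `k ≥ 0` (so `P(A_r) ≤ 1`), and `σ(A_r) = {r}`. -/
theorem Ar_power_bounded_and_spectrum
    (n : ℕ) (hn : 1 ≤ n) (r : ℝ) (hr : r ∈ Set.Ioo (0:ℝ) 1) :
    (∀ k : ℕ, ‖(Matrix.toEuclideanCLM (𝕜 := ℂ) (ArMatrix n r)) ^ k‖ ≤ 1) ∧
      spectrum ℂ (ArMatrix n r) = {(r : ℂ)} := by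
  set M := jordanNilpotent n
  have hM := isNilpotent_jordanNilpotent n
  constructor
  · have hr' : |r| ≤ 1 := abs_le.mpr ⟨by linarith [hr.1], hr.2.le⟩
    have hdet : IsUnit (1 + (r : ℂ) • M).det :=
      (isUnit_iff_isUnit_det _).mp (hM.smul _).isUnit_one_add
    have hV : (1 + (r : ℂ) • toEuclideanCLM (𝕜 := ℂ) M) *
        toEuclideanCLM (𝕜 := ℂ) (1 + (r : ℂ) • M)⁻¹ = 1 := by
      rw [← map_one (toEuclideanCLM (𝕜 := ℂ) (n := Fin n)), ← map_smul, ← map_add, ← map_mul,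
        mul_nonsing_inv _ hdet]
    refine ContinuousLinearMap.norm_pow_le_one ?_
    rw [ArMatrix, map_mul, map_add, map_smul, map_one]
    exact ContinuousLinearMap.norm_mobius_le_one
      (norm_toEuclideanCLM_jordanNilpotent_le n) hr' hV
  · have : NeZero n := ⟨by omega⟩
    rw [← add_sub_cancel (algebraMap ℂ _ (r : ℂ)) (ArMatrix n r)]
    refine spectrum_algebraMap_add_of_isNilpotent _ ?_
    rw [Algebra.algebraMap_eq_smul_one]
    exact isNilpotent_mobius_sub_smul_one hM _
end

section
/- Let j ≥ 0. There exists a constant C_j > 0 depending only on j such that for all n ≥ 1, all λ_1, …, λ_n ∈ 𝔻 with associated Malmquist family (e_k)_{1≤k≤n}, all 1 ≤ k ≤ n, and all λ⋆ ∈ ℂ with |λ⋆| = 1, one has |e_k^{(j)}(λ⋆)| ≤ C_j · (1 − |λ_k|²)^{1/2} · k^j / (dist(λ⋆, σ))^{j+1}, where σ = {λ_1, …, λ_n} and dist(λ⋆, σ) = min_i |λ⋆ − λ_i|. -/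
/-- The elementary Blaschke factor `b_a(z) = (a - z)/(1 - ā z)`. -/
noncomputable def blaschkeFactor (a z : ℂ) : ℂ := (a - z) / (1 - (starRingEnd ℂ) a * z)

/-- The Malmquist family associated with `λ_1, …, λ_n ∈ 𝔻`:
`e_k(z) = (∏_{j<k} b_{λ_j}(z)) · (1 - |λ_k|²)^{1/2} / (1 - conj(λ_k) z)`. -/
noncomputable def malmquist {n : ℕ} (lam : Fin n → ℂ) (k : Fin n) (z : ℂ) : ℂ :=
  (∏ j ∈ Finset.Iio k, blaschkeFactor (lam j) z) *
    ((Real.sqrt (1 - ‖lam k‖ ^ 2) : ℂ) / (1 - (starRingEnd ℂ) (lam k) * z))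

/-! On the unit circle `‖1 - conj a * w‖ = ‖w - a‖`. Hence, with `d = dist(λ⋆, σ)`, on the disc of
radius `d / (4k)` around `λ⋆` each Blaschke factor has modulus at most `1 + 1/k` and the last
factor of `e_k` at most `(4/3) (1 - |λ_k|²)^{1/2} / d`; as `(1 + 1/k)^(k-1) ≤ e < 3`, this gives
`|e_k| ≤ 4 (1 - |λ_k|²)^{1/2} / d` on that disc, and Cauchy's estimate there supplies the factor
`j! (4k/d)^j`. -/

open Metric Finset ComplexConjugate
open scoped Nat

section UnitCircle

variable {a w z : ℂ} {r : ℝ}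

theorem norm_one_sub_conj_mul_of_norm_eq_one (hw : ‖w‖ = 1) (a : ℂ) :
    ‖1 - conj a * w‖ = ‖w - a‖ := by
  have hnormSq : Complex.normSq w = 1 := by rw [← Complex.sq_norm, hw, one_pow]
  have h : 1 - conj a * w = w * conj (w - a) := by
    rw [map_sub, mul_sub, Complex.mul_conj, hnormSq]; push_cast; ring
  rw [h, norm_mul, hw, Complex.norm_conj, one_mul]

theorem norm_sub_sub_le_norm_one_sub_conj_mul (hw : ‖w‖ = 1) (ha : ‖a‖ ≤ 1)
    (hz : ‖z - w‖ ≤ r) : ‖w - a‖ - r ≤ ‖1 - conj a * z‖ := by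
  have hconj : ‖conj a * (z - w)‖ ≤ r := by
    rw [norm_mul, Complex.norm_conj]
    exact (mul_le_of_le_one_left (norm_nonneg _) ha).trans hz
  have htri := norm_add_le (1 - conj a * z) (conj a * (z - w))
  rw [show 1 - conj a * z + conj a * (z - w) = 1 - conj a * w by ring,
    norm_one_sub_conj_mul_of_norm_eq_one hw] at htri
  linarith

theorem norm_blaschkeFactor_le_one_add_inv {K : ℝ} (hw : ‖w‖ = 1) (ha : ‖a‖ ≤ 1)
    (hK : 0 < K) (hr : 0 < r) (hz : ‖z - w‖ ≤ r) (hfar : (2 * K + 1) * r ≤ ‖w - a‖) :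
    ‖blaschkeFactor a z‖ ≤ 1 + K⁻¹ := by
  have hden := norm_sub_sub_le_norm_one_sub_conj_mul hw ha hz
  have hnum : ‖a - z‖ ≤ ‖w - a‖ + r := by
    calc ‖a - z‖ = ‖(w - z) - (w - a)‖ := by congr 1; ring
      _ ≤ ‖w - z‖ + ‖w - a‖ := norm_sub_le _ _
      _ ≤ ‖w - a‖ + r := by rw [norm_sub_rev]; linarith
  have hpos : 0 < ‖w - a‖ - r := by nlinarith
  rw [blaschkeFactor, norm_div, div_le_iff₀ (hpos.trans_le hden)]
  calc ‖a - z‖ ≤ ‖w - a‖ + r := hnum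
    _ ≤ (1 + K⁻¹) * (‖w - a‖ - r) := by
      have h2r : 2 * r ≤ K⁻¹ * (‖w - a‖ - r) := by
        rw [inv_mul_eq_div, le_div_iff₀ hK]; linarith
      linarith
    _ ≤ (1 + K⁻¹) * ‖1 - conj a * z‖ := by gcongr

theorem one_sub_conj_mul_ne_zero (hw : ‖w‖ = 1) (ha : ‖a‖ ≤ 1) (hz : ‖z - w‖ < ‖w - a‖) :
    1 - conj a * z ≠ 0 := by
  rw [← norm_pos_iff]
  linarith [norm_sub_sub_le_norm_one_sub_conj_mul hw ha le_rfl (z := z)]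

theorem norm_prod_blaschkeFactor_le_exp_one {ι : Type*} (s : Finset ι) (lam : ι → ℂ) {K : ℝ}
    (hw : ‖w‖ = 1) (hlam : ∀ i ∈ s, ‖lam i‖ ≤ 1) (hK : 0 < K) (hsK : (#s : ℝ) ≤ K)
    (hr : 0 < r) (hz : ‖z - w‖ ≤ r) (hfar : ∀ i ∈ s, (2 * K + 1) * r ≤ ‖w - lam i‖) :
    ‖∏ i ∈ s, blaschkeFactor (lam i) z‖ ≤ Real.exp 1 := by
  rw [norm_prod]
  calc ∏ i ∈ s, ‖blaschkeFactor (lam i) z‖ ≤ ∏ _i ∈ s, (1 + K⁻¹) :=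
        prod_le_prod (fun _ _ ↦ norm_nonneg _) fun i hi ↦
          norm_blaschkeFactor_le_one_add_inv hw (hlam i hi) hK hr hz (hfar i hi)
    _ = (1 + K⁻¹) ^ #s := prod_const _
    _ ≤ Real.exp K⁻¹ ^ #s := by gcongr; linarith [Real.add_one_le_exp K⁻¹]
    _ = Real.exp (#s * K⁻¹) := (Real.exp_nat_mul _ _).symm
    _ ≤ Real.exp 1 := by
      gcongr
      rwa [← div_eq_mul_inv, div_le_one hK]

end UnitCircle

theorem infDist_range_pos_of_norm_eq_one {ι : Type*} [Finite ι] [Nonempty ι] {lam : ι → ℂ}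
    (hlam : ∀ i, ‖lam i‖ < 1) {w : ℂ} (hw : ‖w‖ = 1) : 0 < infDist w (Set.range lam) := by
  refine ((Set.finite_range lam).isClosed.notMem_iff_infDist_pos (Set.range_nonempty lam)).1 ?_
  rintro ⟨i, rfl⟩
  exact (hlam i).ne hw

theorem differentiableAt_blaschkeFactor {a z : ℂ} (h : 1 - conj a * z ≠ 0) :
    DifferentiableAt ℂ (blaschkeFactor a) z :=
  (differentiableAt_const a).sub differentiableAt_id |>.div
    ((differentiableAt_const 1).sub ((differentiableAt_const _).mul differentiableAt_id)) h

section Malmquist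

variable {n : ℕ} {lam : Fin n → ℂ} {k : Fin n} {w z : ℂ}

theorem differentiableAt_malmquist (h : ∀ i, 1 - conj (lam i) * z ≠ 0) :
    DifferentiableAt ℂ (malmquist lam k) z := by
  unfold malmquist
  refine .mul ?_ ?_
  · exact .fun_finsetProd fun i _ ↦ differentiableAt_blaschkeFactor (h i)
  · exact (differentiableAt_const _).div (by fun_prop) (h k)

theorem norm_malmquist_le {d : ℝ} (hw : ‖w‖ = 1) (hlam : ∀ i, ‖lam i‖ ≤ 1) (hd : 0 < d)
    (hfar : ∀ i, d ≤ ‖w - lam i‖) (hz : ‖z - w‖ ≤ d / (4 * ((k : ℕ) + 1))) :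
    ‖malmquist lam k z‖ ≤ 4 * √(1 - ‖lam k‖ ^ 2) / d := by
  set K : ℝ := (k : ℕ) + 1
  have hK : 1 ≤ K := by simp [K]
  have hr : 0 < d / (4 * K) := by positivity
  have hrd : d / (4 * K) ≤ d / 4 := by gcongr; linarith
  have hfar' : ∀ i, (2 * K + 1) * (d / (4 * K)) ≤ ‖w - lam i‖ := fun i ↦ by
    refine le_trans ?_ (hfar i)
    rw [mul_div_assoc', div_le_iff₀ (by positivity)]
    nlinarith
  have hprod := norm_prod_blaschkeFactor_le_exp_one (Iio k) lam hw (fun i _ ↦ hlam i)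
    (by positivity) (by simp [K]) hr hz fun i _ ↦ hfar' i
  have hden : 3 * d / 4 ≤ ‖1 - conj (lam k) * z‖ := by
    linarith [norm_sub_sub_le_norm_one_sub_conj_mul hw (hlam k) hz, hfar k]
  rw [malmquist, norm_mul, norm_div, Complex.norm_real, Real.norm_of_nonneg (Real.sqrt_nonneg _)]
  calc _ ≤ Real.exp 1 * (√(1 - ‖lam k‖ ^ 2) / (3 * d / 4)) := by gcongr
    _ ≤ 3 * (√(1 - ‖lam k‖ ^ 2) / (3 * d / 4)) := by
      gcongr; linarith [Real.exp_one_lt_d9]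
    _ = 4 * √(1 - ‖lam k‖ ^ 2) / d := by field_simp

end Malmquist

/-- For each `j ≥ 0` there is `C_j > 0` such that for all `n ≥ 1`,
all `λ_1, …, λ_n ∈ 𝔻` with Malmquist family `(e_k)`, all `1 ≤ k ≤ n` and all `|λ⋆| = 1`:
`|e_k^{(j)}(λ⋆)| ≤ C_j (1-|λ_k|²)^{1/2} k^j / dist(λ⋆, σ)^{j+1}` (here the index of
`k : Fin n` is the 1-based index `(k : ℕ) + 1`). -/
theorem malmquist_deriv_estimate (j : ℕ) :
    ∃ C : ℝ, 0 < C ∧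
      ∀ (n : ℕ), 1 ≤ n → ∀ lam : Fin n → ℂ, (∀ i, ‖lam i‖ < 1) →
        ∀ k : Fin n, ∀ lamstar : ℂ, ‖lamstar‖ = 1 →
          ‖iteratedDeriv j (malmquist lam k) lamstar‖
            ≤ C * Real.sqrt (1 - ‖lam k‖ ^ 2) * ((k : ℕ) + 1) ^ j /
                Metric.infDist lamstar (Set.range lam) ^ (j + 1) := by
  refine ⟨4 ^ (j + 1) * j !, by positivity, fun n _ lam hlam k w hw ↦ ?_⟩
  have : Nonempty (Fin n) := ⟨k⟩
  set d := infDist w (Set.range lam)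
  have hd : 0 < d := infDist_range_pos_of_norm_eq_one hlam hw
  have hfar : ∀ i, d ≤ ‖w - lam i‖ := fun i ↦ by
    simpa [dist_eq_norm] using infDist_le_dist_of_mem (Set.mem_range_self (f := lam) i)
  set r := d / (4 * ((k : ℕ) + 1))
  have hr : 0 < r := by positivity
  have hrd : r < d := div_lt_self hd (by linarith [(k : ℕ).cast_nonneg (α := ℝ)])
  have hdiff : DifferentiableOn ℂ (malmquist lam k) (closedBall w r) := fun z hz ↦
    (differentiableAt_malmquist fun i ↦ one_sub_conj_mul_ne_zero hw (hlam i).le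
      ((mem_closedBall_iff_norm.1 hz).trans_lt (hrd.trans_le (hfar i)))).differentiableWithinAt
  calc _ ≤ j ! * (4 * √(1 - ‖lam k‖ ^ 2) / d) / r ^ j :=
        Complex.norm_iteratedDeriv_le_of_forall_mem_sphere_norm_le j hr
          (hdiff.diffContOnCl_ball subset_rfl) fun z hz ↦
            norm_malmquist_le hw (fun i ↦ (hlam i).le) hd hfar (mem_sphere_iff_norm.1 hz).le
    _ = _ := by simp only [r, div_pow, mul_pow]; field_simp; ring
end

section
/- Let n ≥ 1, r ∈ (0,1), and λ ∈ ℂ with λ ≠ r. Then the matrices (λ−r) I_n − (1−λr) M_n and λ I_n − A_r are invertible, and (λ I_n − A_r)^{−1} = (I_n + r M_n) · ((λ−r) I_n − (1−λr) M_n)^{−1}. -/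
lemma det_lin_comb (n : ℕ) (a b : ℂ) :
    (a • (1 : Matrix (Fin n) (Fin n) ℂ) + b • jordanNilpotent n).det = a ^ n := by
  have ht : (a • (1 : Matrix (Fin n) (Fin n) ℂ) + b • jordanNilpotent n).BlockTriangular id := by
    intro i j hij
    have hv : (j : ℕ) < (i : ℕ) := hij
    simp only [Matrix.add_apply, Matrix.smul_apply, Matrix.one_apply, jordanNilpotent,
      Matrix.of_apply, smul_eq_mul]
    have h1 : i ≠ j := by intro h; subst h; omega
    have h2 : (i : ℕ) + 1 ≠ (j : ℕ) := by omega
    simp [h1, h2]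
  rw [Matrix.det_of_upperTriangular ht]
  have : ∀ i : Fin n, (a • (1 : Matrix (Fin n) (Fin n) ℂ) + b • jordanNilpotent n) i i = a := by
    intro i
    simp [jordanNilpotent, Matrix.one_apply]
  simp [this]

/-- For `n ≥ 1`, `r ∈ (0,1)` and `λ ≠ r`, the matrices
`(λ-r)Iₙ - (1-λr)Mₙ` and `λIₙ - A_r` are invertible and
`(λIₙ - A_r)⁻¹ = (Iₙ + rMₙ)((λ-r)Iₙ - (1-λr)Mₙ)⁻¹`. -/
theorem resolvent_Ar_formula (n : ℕ) (hn : 1 ≤ n) (r : ℝ) (hr : r ∈ Set.Ioo (0:ℝ) 1)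
    (lambda : ℂ) (hlam : lambda ≠ (r : ℂ)) :
    IsUnit ((lambda - (r : ℂ)) • (1 : Matrix (Fin n) (Fin n) ℂ) -
        (1 - lambda * (r : ℂ)) • jordanNilpotent n) ∧
      IsUnit (lambda • (1 : Matrix (Fin n) (Fin n) ℂ) - ArMatrix n r) ∧
      (lambda • (1 : Matrix (Fin n) (Fin n) ℂ) - ArMatrix n r)⁻¹
        = (1 + (r : ℂ) • jordanNilpotent n) *
            ((lambda - (r : ℂ)) • (1 : Matrix (Fin n) (Fin n) ℂ) -
              (1 - lambda * (r : ℂ)) • jordanNilpotent n)⁻¹ := by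
  set M := jordanNilpotent n with hM
  set B := (lambda - (r : ℂ)) • (1 : Matrix (Fin n) (Fin n) ℂ) - (1 - lambda * (r : ℂ)) • M
    with hB
  set C := (1 : Matrix (Fin n) (Fin n) ℂ) + (r : ℂ) • M with hC
  have hdetB : B.det = (lambda - (r : ℂ)) ^ n := by
    have := det_lin_comb n (lambda - (r : ℂ)) (-(1 - lambda * (r : ℂ)))
    rw [hB, sub_eq_add_neg, ← neg_smul]
    exact this
  have hdetC : C.det = 1 := by
    have := det_lin_comb n (1 : ℂ) ((r : ℂ))
    rw [hC]
    simpa using this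
  have hBu : IsUnit B.det := by
    rw [hdetB]
    exact (isUnit_iff_ne_zero.mpr (pow_ne_zero _ (sub_ne_zero.mpr hlam)))
  have hCu : IsUnit C.det := by rw [hdetC]; exact isUnit_one
  -- key factorization
  have hfac : lambda • (1 : Matrix (Fin n) (Fin n) ℂ) - ArMatrix n r = B * C⁻¹ := by
    have h1 : lambda • (1 : Matrix (Fin n) (Fin n) ℂ) = (lambda • C) * C⁻¹ := by
      rw [Matrix.smul_mul, Matrix.mul_nonsing_inv C hCu]
    rw [ArMatrix, ← hM, ← hC, h1, ← Matrix.sub_mul]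
    congr 1
    rw [hB, hC]
    rw [smul_add, smul_smul]
    module
  have hlamu : IsUnit (lambda • (1 : Matrix (Fin n) (Fin n) ℂ) - ArMatrix n r).det := by
    rw [hfac, Matrix.det_mul]
    exact hBu.mul (Matrix.isUnit_nonsing_inv_det C hCu)
  refine ⟨(Matrix.isUnit_iff_isUnit_det B).mpr hBu,
    (Matrix.isUnit_iff_isUnit_det _).mpr hlamu, ?_⟩
  rw [hfac, Matrix.mul_inv_rev, Matrix.nonsing_inv_nonsing_inv C hCu]
end
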